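/- arXiv:2307.09635 — 7 statements merged into one kernel-verified Lean document; each statement's English description precedes it below -/
import Mathlib

section
/- Let D = diag(d₁,…,dₙ) with 0 < d₁ < d₂ < ⋯ < dₙ and let a, b ∈ ℝⁿ satisfy a_i b_i > 0 for all i. Set A = D + abᵀ. Then A has n real eigenvalues λ₁ < λ₂ < ⋯ < λₙ that strictly interlace the d_i: d₁ < λ₁ < d₂ < λ₂ < d₃ < ⋯ < dₙ < λₙ. In particular all eigenvalues of A are positive. -/
/-!
By the matrix determinant lemma the characteristic polynomial of `D + a bᵀ` is
`Q(x) = ∏ᵢ (x - dᵢ) - ∑ᵢ aᵢ bᵢ ∏_{j ≠ i} (x - dⱼ)`, so `Q(d_k) = -a_k b_k ∏_{j ≠ k} (d_k - d_j)`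
is nonzero with sign `(-1)^(n-k)` (counting `k` from `0`). Hence `Q` changes sign on every
interval `(d_k, d_{k+1})`, and, being monic with `Q(d_{n-1}) < 0`, also on `(d_{n-1}, ∞)`.
The intermediate value theorem yields `n` distinct roots interlacing the `dᵢ`, and a monic
polynomial of degree `n` with `n` distinct roots is the product of the corresponding linear factors.
-/

open Matrix Polynomial Finset

theorem Matrix.det_diagonal_add_vecMulVec {K ι : Type*} [Field K] [Fintype ι] [DecidableEq ι]
    {e : ι → K} (he : ∀ i, e i ≠ 0) (u v : ι → K) :
    (diagonal e + vecMulVec u v).det = ∏ i, e i + ∑ i, u i * v i * ∏ j ∈ univ.erase i, e j := by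
  have hfactor : diagonal e + vecMulVec u v = diagonal e * (1 + vecMulVec (u / e) v) := by
    ext i j
    rw [Matrix.mul_add, Matrix.mul_one, add_apply, add_apply, diagonal_mul, vecMulVec_apply,
      vecMulVec_apply, Pi.div_apply, ← mul_assoc, mul_div_cancel₀ _ (he i)]
  rw [hfactor, det_mul, det_diagonal, vecMulVec_eq Unit,
    det_one_add_replicateCol_mul_replicateRow, dotProduct, mul_add, mul_one, mul_sum]
  congr 1
  refine sum_congr rfl fun i _ => ?_
  rw [← mul_prod_erase univ e (mem_univ i), Pi.div_apply]
  field_simp [he i]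

theorem Matrix.charpoly_diagonal_add_vecMulVec {R ι : Type*} [CommRing R] [IsDomain R]
    [Fintype ι] [DecidableEq ι] (d a b : ι → R) :
    (diagonal d + vecMulVec a b).charpoly =
      ∏ i, (X - C (d i)) - ∑ i, C (a i * b i) * ∏ j ∈ univ.erase i, (X - C (d j)) := by
  have hcharmatrix : charmatrix (diagonal d + vecMulVec a b) =
      diagonal (fun i => X - C (d i)) + vecMulVec (fun i => -C (a i)) (fun i => C (b i)) := by
    ext i j
    rcases eq_or_ne i j with rfl | hij
    · simp [vecMulVec_apply]
      ring
    · simp [vecMulVec_apply, hij]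
  -- In the fraction field of `R[X]` the diagonal entries `X - C (d i)` become invertible.
  set f := algebraMap R[X] (FractionRing R[X])
  have hf : Function.Injective f := IsFractionRing.injective R[X] (FractionRing R[X])
  have hmap : (diagonal (fun i => X - C (d i)) +
        vecMulVec (fun i => -C (a i)) (fun i => C (b i))).map f =
      diagonal (fun i => f (X - C (d i))) +
        vecMulVec (fun i => f (-C (a i))) (fun i => f (C (b i))) := by
    ext i j
    simp [diagonal_apply, vecMulVec_apply, apply_ite f]
  apply hf
  rw [charpoly, hcharmatrix, RingHom.map_det, RingHom.mapMatrix_apply, hmap,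
    det_diagonal_add_vecMulVec fun i => (map_ne_zero_iff f hf).2 (X_sub_C_ne_zero (d i))]
  simp [sub_eq_add_neg]

theorem Matrix.eval_charpoly_diagonal_add_vecMulVec_self {R ι : Type*} [CommRing R]
    [IsDomain R] [Fintype ι] [DecidableEq ι] (d a b : ι → R) (k : ι) :
    (diagonal d + vecMulVec a b).charpoly.eval (d k) =
      -(a k * b k * ∏ j ∈ univ.erase k, (d k - d j)) := by
  have hvanish : ∀ i ≠ k, ∏ j ∈ univ.erase i, (d k - d j) = 0 := fun i hik =>
    prod_eq_zero (mem_erase.2 ⟨hik.symm, mem_univ k⟩) (sub_self _)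
  rw [charpoly_diagonal_add_vecMulVec]
  simp only [eval_sub, eval_prod, eval_finsetSum, eval_mul, eval_C, eval_X]
  rw [prod_eq_zero (mem_univ k) (sub_self _), zero_sub,
    sum_eq_single k (fun i _ hik => by rw [hvanish i hik, mul_zero]) (by simp)]

theorem Fin.neg_one_pow_mul_prod_erase_sub_pos {R : Type*} [CommRing R] [LinearOrder R]
    [IsStrictOrderedRing R] {n : ℕ} {d : Fin n → R} (hd : StrictMono d) (k : Fin n) :
    0 < (-1) ^ (n - 1 - k : ℕ) * ∏ j ∈ univ.erase k, (d k - d j) := by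
  have hbelow : 0 < ∏ j ∈ Iio k, (d k - d j) :=
    prod_pos fun j hj => sub_pos.2 (hd (mem_Iio.1 hj))
  have habove : 0 < ∏ j ∈ Ioi k, (d j - d k) :=
    prod_pos fun j hj => sub_pos.2 (hd (mem_Ioi.1 hj))
  have hflip : ∏ j ∈ Ioi k, (d k - d j) =
      (-1) ^ (n - 1 - k : ℕ) * ∏ j ∈ Ioi k, (d j - d k) := by
    rw [← card_Ioi, ← prod_neg]
    simp only [neg_sub]
  rw [← compl_singleton, ← Ioi_disjUnion_Iio, prod_disjUnion, hflip, ← mul_assoc, ← mul_assoc,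
    ← pow_add, Even.neg_one_pow ⟨_, rfl⟩, one_mul]
  exact mul_pos habove hbelow

theorem mul_neg_of_neg_one_pow_mul_pos {R : Type*} [CommRing R] [LinearOrder R]
    [IsStrictOrderedRing R] {m : ℕ} {x y : R} (hx : 0 < (-1) ^ (m + 1) * x)
    (hy : 0 < (-1) ^ m * y) : x * y < 0 := by
  rcases neg_one_pow_eq_or R m with hm | hm <;> rw [pow_succ, hm] at hx <;> rw [hm] at hy <;>
    nlinarith

theorem exists_mem_Ioo_eq_zero_of_mul_neg {α : Type*} [ConditionallyCompleteLinearOrder α]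
    [TopologicalSpace α] [OrderTopology α] [DenselyOrdered α] {f : α → ℝ} {x y : α}
    (hxy : x ≤ y) (hf : ContinuousOn f (Set.Icc x y)) (h : f x * f y < 0) :
    ∃ z ∈ Set.Ioo x y, f z = 0 := by
  rcases mul_neg_iff.1 h with ⟨hx, hy⟩ | ⟨hx, hy⟩
  · exact intermediate_value_Ioo' hxy hf ⟨hy, hx⟩
  · exact intermediate_value_Ioo hxy hf ⟨hx, hy⟩

theorem Polynomial.Monic.exists_isRoot_gt_of_eval_neg {p : ℝ[X]} (hp : p.Monic) {x : ℝ}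
    (hx : p.eval x < 0) : ∃ y, x < y ∧ p.IsRoot y := by
  have hdeg : 0 < p.degree := by
    by_contra! h
    rw [eq_one_of_monic_natDegree_zero hp (natDegree_eq_zero_iff_degree_le_zero.2 h),
      eval_one] at hx
    linarith
  have hlead : 0 ≤ p.leadingCoeff := by
    rw [Monic.leadingCoeff hp]
    exact zero_le_one
  obtain ⟨y, hxy, hy⟩ := ((Filter.eventually_gt_atTop x).and
    ((p.tendsto_atTop_of_leadingCoeff_nonneg hdeg hlead).eventually_gt_atTop 0)).exists
  obtain ⟨z, hz, hz0⟩ := exists_mem_Ioo_eq_zero_of_mul_neg hxy.le p.continuousOn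
    (mul_neg_of_neg_of_pos hx hy)
  exact ⟨z, hz.1, hz0⟩

theorem Polynomial.Monic.eq_prod_X_sub_C_of_injective {K ι : Type*} [Field K] [Fintype ι]
    {p : K[X]} (hp : p.Monic) (hdeg : p.natDegree = Fintype.card ι) {f : ι → K}
    (hf : Function.Injective f) (hroot : ∀ i, p.IsRoot (f i)) : p = ∏ i, (X - C (f i)) := by
  have hmonic : (∏ i, (X - C (f i))).Monic := monic_prod_of_monic _ _ fun i _ => monic_X_sub_C _
  refine (eq_of_dvd_of_natDegree_le_of_leadingCoeff ?_ ?_ ?_).symm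
  · exact Fintype.prod_dvd_of_coprime (pairwise_coprime_X_sub_C hf)
      fun i => dvd_iff_isRoot.2 (hroot i)
  · rw [hdeg, natDegree_prod_of_monic _ _ fun i _ => monic_X_sub_C (f i)]
    simp
  · rw [Monic.leadingCoeff hp, Monic.leadingCoeff hmonic]

section

variable {n : ℕ} {d a b : Fin n → ℝ}

theorem neg_one_pow_mul_eval_charpoly_pos (hd : StrictMono d) (hab : ∀ i, 0 < a i * b i)
    (k : Fin n) :
    0 < (-1) ^ (n - k : ℕ) * (diagonal d + vecMulVec a b).charpoly.eval (d k) := by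
  rw [eval_charpoly_diagonal_add_vecMulVec_self, show n - k = n - 1 - k + 1 by omega, pow_succ]
  calc 0 < a k * b k * ((-1) ^ (n - 1 - k : ℕ) * ∏ j ∈ univ.erase k, (d k - d j)) :=
        mul_pos (hab k) (Fin.neg_one_pow_mul_prod_erase_sub_pos hd k)
    _ = _ := by ring

theorem exists_isRoot_charpoly_interlacing (hd : StrictMono d) (hab : ∀ i, 0 < a i * b i)
    (k : Fin n) : ∃ x, d k < x ∧ (∀ h : (k : ℕ) + 1 < n, x < d ⟨k + 1, h⟩) ∧
      (diagonal d + vecMulVec a b).charpoly.IsRoot x := by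
  have hsign := neg_one_pow_mul_eval_charpoly_pos hd hab
  by_cases hk : (k : ℕ) + 1 < n
  · have hsign_next := hsign ⟨k + 1, hk⟩
    have hsign_self := hsign k
    rw [show n - k = n - (k + 1) + 1 by omega] at hsign_self
    obtain ⟨x, hx, hroot⟩ := exists_mem_Ioo_eq_zero_of_mul_neg
      (hd.monotone (Fin.le_def.2 (by simp))) (Polynomial.continuousOn _)
      (mul_neg_of_neg_one_pow_mul_pos hsign_self hsign_next)
    exact ⟨x, hx.1, fun _ => hx.2, hroot⟩
  · have hneg : (diagonal d + vecMulVec a b).charpoly.eval (d k) < 0 := by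
      simpa [show n - k = 1 by omega] using hsign k
    obtain ⟨x, hx, hroot⟩ := (charpoly_monic _).exists_isRoot_gt_of_eval_neg hneg
    exact ⟨x, hx, fun h => absurd h hk, hroot⟩

end

/-- Interlacing: for `A = D + a bᵀ` with `0 < d₁ < ⋯ < dₙ` and `a i * b i > 0` for all `i`,
the matrix `A` has `n` real eigenvalues `λ₁ < ⋯ < λₙ` (the roots of its characteristic
polynomial) which strictly interlace the `d i`:
`d₁ < λ₁ < d₂ < λ₂ < ⋯ < dₙ < λₙ`; in particular all eigenvalues are positive. -/
theorem stmt_3 (n : ℕ) (d a b : Fin n → ℝ)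
    (hd : StrictMono d) (hd0 : ∀ i, 0 < d i) (hab : ∀ i, 0 < a i * b i) :
    ∃ lam : Fin n → ℝ, StrictMono lam ∧
      (Matrix.diagonal d + Matrix.vecMulVec a b).charpoly = ∏ i, (X - C (lam i)) ∧
      (∀ i, d i < lam i) ∧
      (∀ i : Fin n, ∀ h : (i : ℕ) + 1 < n, lam i < d ⟨(i : ℕ) + 1, h⟩) ∧
      (∀ i, 0 < lam i) := by
  choose lam hlower hupper hroot using exists_isRoot_charpoly_interlacing hd hab
  have hmono : StrictMono lam := fun i j hij =>
    have hi : (i : ℕ) + 1 < n := by omega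
    calc lam i < d ⟨i + 1, hi⟩ := hupper i hi
      _ ≤ d j := hd.monotone (Fin.le_def.2 hij)
      _ < lam j := hlower j
  refine ⟨lam, hmono, ?_, hlower, hupper, fun i => (hd0 i).trans (hlower i)⟩
  exact (charpoly_monic _).eq_prod_X_sub_C_of_injective
    (charpoly_natDegree_eq_dim _) hmono.injective hroot
end

section
/- Let D = diag(d₁,…,dₙ) be a real diagonal matrix and let a, b ∈ ℝⁿ with a_i ≠ 0 for all i. Set A = D + abᵀ and S = diag(b₁/a₁, …, bₙ/aₙ). Then AᵀS = SA. Moreover, if in addition a_i b_i > 0 for all i, then S is a positive definite diagonal matrix. -/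
open Matrix

/-- For `A = D + a bᵀ` with `a i ≠ 0` and `S = diag (b i / a i)`, the Sylvester equation
`AᵀS = SA` holds; moreover if `a i * b i > 0` for all `i` then `S` is positive definite. -/
theorem stmt_4 (n : ℕ) (d a b : Fin n → ℝ) (ha : ∀ i, a i ≠ 0) :
    (Matrix.diagonal d + Matrix.vecMulVec a b)ᵀ * Matrix.diagonal (fun i => b i / a i)
      = Matrix.diagonal (fun i => b i / a i) * (Matrix.diagonal d + Matrix.vecMulVec a b) ∧
    ((∀ i, 0 < a i * b i) → (Matrix.diagonal (fun i => b i / a i)).PosDef) := by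
  constructor
  · rw [Matrix.transpose_add, Matrix.add_mul, Matrix.mul_add, Matrix.diagonal_transpose]
    ext i j
    simp only [Matrix.add_apply, Matrix.mul_diagonal, Matrix.diagonal_mul,
      Matrix.transpose_apply, Matrix.vecMulVec_apply, Matrix.diagonal_apply]
    by_cases h : i = j <;> simp [h] <;> field_simp [ha i, ha j] <;> ring
  · intro hab
    rw [Matrix.posDef_diagonal_iff]
    intro i
    have := hab i
    have hai := (ha i)
    rcases lt_or_gt_of_ne hai with h | h
    · have hb : b i < 0 := by nlinarith
      exact div_pos_of_neg_of_neg hb h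
    · have hb : 0 < b i := by nlinarith
      exact div_pos hb h
end

section
/- Let A be a real n×n matrix and suppose there exists a diagonal matrix S = diag(s₁,…,sₙ) with all s_i > 0 such that AᵀS = SA. Then every complex eigenvalue λ of A is real, and there exists an index i such that |λ − A_{ii}| ≤ Σ_{j≠i} √(A_{ij}·A_{ji}). (Note that the hypothesis forces A_{ij}·A_{ji} ≥ 0 for all i ≠ j, so the square roots are defined.) -/
open Matrix Finset Polynomial

lemma myEvalCharpoly {m : Type*} [Fintype m] [DecidableEq m] {R : Type*} [CommRing R]
    (M : Matrix m m R) (t : R) :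
    M.charpoly.eval t = (Matrix.diagonal (fun _ => t) - M).det := by
  rw [Matrix.charpoly, ← Polynomial.coe_evalRingHom, RingHom.map_det]
  congr 1
  ext i j
  by_cases h : i = j <;>
    simp [h, Matrix.charmatrix_apply, Matrix.diagonal_apply, RingHom.mapMatrix_apply]

lemma myConjCharpoly {m : Type*} [Fintype m] [DecidableEq m] {K : Type*} [Field K]
    (M : Matrix m m K) (d : m → K) (hd : ∀ i, d i ≠ 0) :
    (Matrix.diagonal d * M * Matrix.diagonal (fun i => (d i)⁻¹)).charpoly = M.charpoly := by
  have key : charmatrix (Matrix.diagonal d * M * Matrix.diagonal (fun i => (d i)⁻¹)) =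
      (Matrix.diagonal fun i => C (d i)) * charmatrix M *
        (Matrix.diagonal fun i => C (d i)⁻¹) := by
    refine Matrix.ext fun i j => ?_
    simp only [Matrix.charmatrix_apply, Matrix.mul_diagonal, Matrix.diagonal_mul]
    by_cases h : i = j
    · subst h
      simp only [Matrix.diagonal_apply_eq]
      have h1 : d i * M i i * (d i)⁻¹ = M i i := by rw [mul_right_comm, mul_inv_cancel₀ (hd i), one_mul]
      rw [h1, mul_comm (C (d i)), mul_assoc, ← C_mul, mul_inv_cancel₀ (hd i), C_1, mul_one]
    · simp only [Matrix.diagonal_apply_ne _ h, zero_sub, mul_neg, neg_mul, ← C_mul]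
  rw [Matrix.charpoly, key, Matrix.det_mul, Matrix.det_mul, Matrix.det_diagonal,
    Matrix.det_diagonal, ← Matrix.charpoly]
  rw [mul_comm, ← mul_assoc, ← Finset.prod_mul_distrib]
  have h2 : ∀ i ∈ Finset.univ (α := m), C (d i)⁻¹ * C (d i) = 1 := fun i _ => by
    rw [← C_mul, inv_mul_cancel₀ (hd i), C_1]
  rw [Finset.prod_congr rfl h2, Finset.prod_const_one, one_mul]

open ComplexOrder in
/-- If `AᵀS = SA` for a positive diagonal matrix `S`, then every complex eigenvalue `λ`
of `A` is real and satisfies `|λ − A i i| ≤ Σ_{j ≠ i} √(A i j * A j i)` for some `i`. -/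
theorem stmt_7 (n : ℕ) (A : Matrix (Fin n) (Fin n) ℝ) (s : Fin n → ℝ)
    (hs : ∀ i, 0 < s i) (hsyl : Aᵀ * Matrix.diagonal s = Matrix.diagonal s * A)
    (μ : ℂ) (hμ : (A.charpoly.map (algebraMap ℝ ℂ)).IsRoot μ) :
    μ.im = 0 ∧
    ∃ i : Fin n, |μ.re - A i i| ≤ ∑ j ∈ Finset.univ.erase i, Real.sqrt (A i j * A j i) := by
  have hA : ∀ i j, A j i * s j = s i * A i j := by
    intro i j
    have := congrFun (congrFun hsyl i) j
    rwa [Matrix.mul_diagonal, Matrix.diagonal_mul, Matrix.transpose_apply] at this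
  set r : Fin n → ℝ := fun i => Real.sqrt (s i) with hrdef
  have hrpos : ∀ i, 0 < r i := fun i => Real.sqrt_pos.2 (hs i)
  have hrne : ∀ i, r i ≠ 0 := fun i => (hrpos i).ne'
  have hrsq : ∀ i, r i * r i = s i := fun i => Real.mul_self_sqrt (hs i).le
  set B : Matrix (Fin n) (Fin n) ℝ :=
    Matrix.diagonal r * A * Matrix.diagonal (fun i => (r i)⁻¹) with hBdef
  have hBij : ∀ i j, B i j = r i * A i j * (r j)⁻¹ := by
    intro i j
    rw [hBdef, Matrix.mul_diagonal, Matrix.diagonal_mul]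
  have hcp : B.charpoly = A.charpoly := myConjCharpoly A r hrne
  have hAji : ∀ i j, A j i = s i * A i j / s j := by
    intro i j
    field_simp [(hs j).ne']
    linear_combination hA i j
  have hBsymm : ∀ i j, B j i = B i j := by
    intro i j
    rw [hBij, hBij, hAji i j, ← hrsq i, ← hrsq j]
    field_simp [hrne i, hrne j]
  -- part 1: μ is real
  set M : Matrix (Fin n) (Fin n) ℂ := B.map (algebraMap ℝ ℂ) with hMdef
  have hμ' : M.charpoly.IsRoot μ := by
    rw [hMdef, Matrix.charpoly_map, hcp]; exact hμ
  have hdet : (Matrix.diagonal (fun _ => μ) - M).det = 0 := by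
    rw [← myEvalCharpoly]; exact hμ'
  obtain ⟨x, hx0, hx⟩ := Matrix.exists_mulVec_eq_zero_iff.mpr hdet
  have hMx : M *ᵥ x = μ • x := by
    funext k
    have h := congrFun hx k
    rw [Matrix.sub_mulVec] at h
    simp only [Pi.sub_apply, Pi.zero_apply, sub_eq_zero, Matrix.mulVec_diagonal] at h
    simp [← h, Pi.smul_apply, smul_eq_mul]
  have hsym : Mᴴ = M := by
    ext i j
    simp only [hMdef, Matrix.conjTranspose_apply, Matrix.map_apply, Complex.coe_algebraMap]
    rw [hBsymm i j, Complex.star_def, Complex.conj_ofReal]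
  have hc : dotProduct (star x) x ≠ 0 :=
    fun h => hx0 (dotProduct_star_self_eq_zero.mp h)
  have h1 : dotProduct (star x) (M *ᵥ x) = μ * dotProduct (star x) x := by
    rw [hMx, dotProduct_smul, smul_eq_mul]
  have h2 : dotProduct (star x) (M *ᵥ x) = star μ * dotProduct (star x) x := by
    rw [Matrix.dotProduct_mulVec]
    have hvm : Matrix.vecMul (star x) M = star μ • star x := by
      conv_lhs => rw [← hsym]
      rw [← Matrix.star_mulVec, hMx, star_smul]
    rw [hvm, smul_dotProduct, smul_eq_mul]
  have hμstar : star μ = μ := mul_right_cancel₀ hc (h2.symm.trans h1)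
  have him : μ.im = 0 := Complex.conj_eq_iff_im.mp hμstar
  refine ⟨him, ?_⟩
  -- part 2: Gershgorin
  have hreal : (↑μ.re : ℂ) = μ := Complex.conj_eq_iff_re.mp hμstar
  have hevalR : A.charpoly.eval μ.re = 0 := by
    have h := hμ
    rw [Polynomial.IsRoot.def, ← hreal, Polynomial.eval_map,
      show ((μ.re : ℂ)) = algebraMap ℝ ℂ μ.re from rfl, Polynomial.eval₂_at_apply] at h
    simpa using h
  have hdetR : (Matrix.diagonal (fun _ => μ.re) - B).det = 0 := by
    rw [← myEvalCharpoly, hcp]; exact hevalR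
  obtain ⟨v, hv0, hv⟩ := Matrix.exists_mulVec_eq_zero_iff.mpr hdetR
  have hBv : B *ᵥ v = μ.re • v := by
    funext k
    have h := congrFun hv k
    rw [Matrix.sub_mulVec] at h
    simp only [Pi.sub_apply, Pi.zero_apply, sub_eq_zero, Matrix.mulVec_diagonal] at h
    simp [← h, Pi.smul_apply, smul_eq_mul]
  have heig : Module.End.HasEigenvalue (Matrix.toLin' B) μ.re :=
    Module.End.hasEigenvalue_of_hasEigenvector
      ⟨Module.End.mem_eigenspace_iff.mpr (by rw [Matrix.toLin'_apply, hBv]), hv0⟩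
  obtain ⟨i, hi⟩ := eigenvalue_mem_ball heig
  rw [Metric.mem_closedBall, Real.dist_eq] at hi
  have hBii : B i i = A i i := by
    rw [hBij, mul_right_comm, mul_inv_cancel₀ (hrne i), one_mul]
  refine ⟨i, ?_⟩
  rw [← hBii]
  refine hi.trans (le_of_eq (Finset.sum_congr rfl fun j _ => ?_))
  have hsq : A i j * A j i = B i j ^ 2 := by
    rw [hBij, hAji i j, ← hrsq i, ← hrsq j]
    field_simp [hrne i, hrne j]
  rw [Real.norm_eq_abs, ← Real.sqrt_sq_eq_abs, hsq]
end

section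
/- Let A be a real n×n matrix for which there exists a diagonal matrix S = diag(s₁,…,sₙ) with all s_i > 0 satisfying AᵀS = SA, and suppose that for every i, Σ_{j≠i} √(A_{ij}·A_{ji}) < A_{ii}. Then every complex eigenvalue of A is a positive real number. -/
/-!
Conjugating `A` by `S^{1/2}` gives the matrix `B i j = √(s i) * A i j / √(s j)`, which has the
characteristic polynomial of `A`, is symmetric by the Sylvester equation, has diagonal `A i i` and
off-diagonal moduli `√(A i j * A j i)`. Being real symmetric, `B` has real spectrum, and
Gershgorin's theorem for `B` puts every eigenvalue at distance less than `A k k` from some `A k k`.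
-/

open Matrix Finset

namespace Matrix

theorem abs_apply_eq_sqrt_mul_apply_of_isSymm {n : Type*} {A : Matrix n n ℝ} (hA : A.IsSymm)
    (i j : n) :
    |A i j| = √(A i j * A j i) := by
  rw [hA.apply i j, Real.sqrt_mul_self_eq_abs]

variable {n : Type*} [Fintype n] [DecidableEq n]

theorem exists_norm_diag_sub_le_of_isRoot_charpoly {K : Type*} [NormedField K]
    {A : Matrix n n K} {μ : K} (hμ : A.charpoly.IsRoot μ) :
    ∃ k, ‖A k k - μ‖ ≤ ∑ j ∈ univ.erase k, ‖A k j‖ := by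
  rw [← charpoly_toLin', ← Module.End.hasEigenvalue_iff_isRoot_charpoly] at hμ
  obtain ⟨k, hk⟩ := eigenvalue_mem_ball hμ
  exact ⟨k, by rwa [Metric.mem_closedBall, dist_comm, dist_eq_norm] at hk⟩

theorem re_pos_of_isRoot_charpoly_of_sum_abs_lt_diag {A : Matrix n n ℝ}
    (hdom : ∀ k, ∑ j ∈ univ.erase k, |A k j| < A k k) {μ : ℂ}
    (hμ : (A.map (algebraMap ℝ ℂ)).charpoly.IsRoot μ) : 0 < μ.re := by
  obtain ⟨k, hk⟩ := exists_norm_diag_sub_le_of_isRoot_charpoly hμ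
  simp only [map_apply, Complex.coe_algebraMap, Complex.norm_real, Real.norm_eq_abs] at hk
  have hre : A k k - μ.re ≤ ‖(A k k : ℂ) - μ‖ := by
    simpa using Complex.re_le_norm ((A k k : ℂ) - μ)
  linarith [hdom k]

theorem im_eq_zero_of_isRoot_charpoly_of_isSymm {A : Matrix n n ℝ} (hA : A.IsSymm) {μ : ℂ}
    (hμ : (A.map (algebraMap ℝ ℂ)).charpoly.IsRoot μ) : μ.im = 0 := by
  have hH : (A.map (algebraMap ℝ ℂ)).IsHermitian :=
    (isHermitian_iff_isSymm.2 hA).map _ fun x => (Complex.conj_ofReal x).symm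
  have hroot := (Polynomial.mem_roots (charpoly_monic _).ne_zero).2 hμ
  rw [hH.roots_charpoly_eq_eigenvalues] at hroot
  obtain ⟨i, -, rfl⟩ := Multiset.mem_map.1 hroot
  simp

section DiagonalConj

variable {K : Type*} [Field K]

theorem diagonal_mul_mul_diagonal_inv_apply (A : Matrix n n K) (d : n → K) (i j : n) :
    (diagonal d * A * diagonal d⁻¹) i j = d i * A i j / d j := by
  simp [div_eq_mul_inv]

theorem charpoly_diagonal_mul_mul_diagonal_inv (A : Matrix n n K) {d : n → K}
    (hd : ∀ i, d i ≠ 0) : (diagonal d * A * diagonal d⁻¹).charpoly = A.charpoly := by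
  have hinv : (fun i => d⁻¹ i * d i) = fun _ => 1 := funext fun i => inv_mul_cancel₀ (hd i)
  rw [mul_assoc, charpoly_mul_comm, mul_assoc, diagonal_mul_diagonal, hinv, diagonal_one,
    mul_one]

theorem diagonal_mul_mul_diagonal_inv_apply_self (A : Matrix n n K) {d : n → K}
    (hd : ∀ i, d i ≠ 0) (i : n) : (diagonal d * A * diagonal d⁻¹) i i = A i i := by
  rw [diagonal_mul_mul_diagonal_inv_apply, mul_div_cancel_left₀ _ (hd i)]

theorem diagonal_mul_mul_diagonal_inv_apply_mul_apply (A : Matrix n n K) {d : n → K}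
    (hd : ∀ i, d i ≠ 0) (i j : n) :
    (diagonal d * A * diagonal d⁻¹) i j * (diagonal d * A * diagonal d⁻¹) j i =
      A i j * A j i := by
  simp only [diagonal_mul_mul_diagonal_inv_apply]
  field_simp [hd i, hd j]

end DiagonalConj

theorem isSymm_diagonal_sqrt_mul_mul_diagonal_inv {A : Matrix n n ℝ} {s : n → ℝ}
    (hs : ∀ i, 0 < s i) (hsyl : Aᵀ * diagonal s = diagonal s * A) :
    (diagonal (fun i => √(s i)) * A * diagonal (fun i => √(s i))⁻¹).IsSymm := by
  refine IsSymm.ext fun i j => ?_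
  have hij := congrFun₂ hsyl j i
  simp only [mul_diagonal, diagonal_mul, transpose_apply] at hij
  rw [diagonal_mul_mul_diagonal_inv_apply, diagonal_mul_mul_diagonal_inv_apply,
    div_eq_div_iff (Real.sqrt_pos.2 (hs i)).ne' (Real.sqrt_pos.2 (hs j)).ne']
  calc √(s j) * A j i * √(s j) = s j * A j i := by
        rw [mul_right_comm, Real.mul_self_sqrt (hs j).le]
    _ = A i j * s i := hij.symm
    _ = √(s i) * A i j * √(s i) := by
        rw [mul_right_comm, Real.mul_self_sqrt (hs i).le, mul_comm]

end Matrix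

/-- If `AᵀS = SA` for a positive diagonal matrix `S` and the diagonal of `A` strictly
dominates in the sense `Σ_{j ≠ i} √(A i j * A j i) < A i i` for every `i`, then every
complex eigenvalue of `A` is a positive real number. -/
theorem stmt_8 (n : ℕ) (A : Matrix (Fin n) (Fin n) ℝ) (s : Fin n → ℝ)
    (hs : ∀ i, 0 < s i) (hsyl : Aᵀ * Matrix.diagonal s = Matrix.diagonal s * A)
    (hdom : ∀ i : Fin n, ∑ j ∈ Finset.univ.erase i, Real.sqrt (A i j * A j i) < A i i)
    (μ : ℂ) (hμ : (A.charpoly.map (algebraMap ℝ ℂ)).IsRoot μ) :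
    μ.im = 0 ∧ 0 < μ.re := by
  have hsqrt : ∀ i, √(s i) ≠ 0 := fun i => (Real.sqrt_pos.2 (hs i)).ne'
  set B := diagonal (fun i => √(s i)) * A * diagonal (fun i => √(s i))⁻¹
  have hB : B.IsSymm := isSymm_diagonal_sqrt_mul_mul_diagonal_inv hs hsyl
  have hμB : (B.map (algebraMap ℝ ℂ)).charpoly.IsRoot μ := by
    rwa [charpoly_map, charpoly_diagonal_mul_mul_diagonal_inv A hsqrt]
  refine ⟨im_eq_zero_of_isRoot_charpoly_of_isSymm hB hμB,
    re_pos_of_isRoot_charpoly_of_sum_abs_lt_diag (fun k => ?_) hμB⟩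
  calc ∑ j ∈ univ.erase k, |B k j| = ∑ j ∈ univ.erase k, √(A k j * A j k) :=
        sum_congr rfl fun j _ => by
          rw [abs_apply_eq_sqrt_mul_apply_of_isSymm hB,
            diagonal_mul_mul_diagonal_inv_apply_mul_apply A hsqrt]
    _ < A k k := hdom k
    _ = B k k := (diagonal_mul_mul_diagonal_inv_apply_self A hsqrt k).symm
end

section
/- Let A be a real n×n matrix, S a symmetric positive definite n×n matrix with AᵀS = SA such that SA is positive definite, and B a symmetric positive definite m×m real matrix with m ≤ n. Define g(X) = (1/4)·tr[(S A X B Xᵀ)²] − (1/2)·tr(S A² X B² Xᵀ) and V(X) = A X B − X B Xᵀ S A X. Then for every X ∈ ℝ^{n×m}, the directional derivative of g at X in direction V(X) equals −tr(S A · V(X) · B · V(X)ᵀ) ≤ 0, with strict inequality whenever V(X) ≠ 0. Hence g strictly decreases along nonequilibrium solutions of dX/dt = V(X). -/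
open Matrix

/-- The potential `g(X) = (1/4)·tr[(S A X B Xᵀ)²] − (1/2)·tr(S A² X B² Xᵀ)` of the
S-Oja-Brockett equation, viewed as a function of `X ∈ ℝ^{n×m}`. -/
noncomputable def gPot (n m : ℕ) (A S : Matrix (Fin n) (Fin n) ℝ)
    (B : Matrix (Fin m) (Fin m) ℝ) (X : Fin n → Fin m → ℝ) : ℝ :=
  (1 / 4) * Matrix.trace ((S * A * Matrix.of X * B * (Matrix.of X)ᵀ) ^ 2)
    - (1 / 2) * Matrix.trace (S * A * A * Matrix.of X * B * B * (Matrix.of X)ᵀ)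

/-- The S-Oja-Brockett vector field `V(X) = A X B − X B Xᵀ S A X`. -/
def vField (n m : ℕ) (A S : Matrix (Fin n) (Fin n) ℝ)
    (B : Matrix (Fin m) (Fin m) ℝ) (X : Fin n → Fin m → ℝ) : Matrix (Fin n) (Fin m) ℝ :=
  A * Matrix.of X * B - Matrix.of X * B * (Matrix.of X)ᵀ * S * A * Matrix.of X

/-!
With `C = S A` symmetric, the Sylvester identity `Aᵀ S = S A` makes `S A²` symmetric too, and the
product rule plus `tr Y = tr Yᵀ` show that the derivative of `g` at `X` in any direction `D` is
`−tr(C V(X) B Dᵀ)`: `−C V(X) B` is the gradient of `g` for the Frobenius inner product. In the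
direction `D = V(X)` this is `−vec(V)ᵀ (Bᵀ ⊗ C) vec(V)`, and a Kronecker product of positive
definite matrices is positive definite.
-/

open scoped Kronecker

section Trace

variable {m n R : Type*} [Fintype m] [Fintype n]

theorem trace_mul_mul_mul_transpose_comm [CommSemiring R] {K : Matrix n n R} (hK : K.IsSymm)
    (D X : Matrix n m R) (L : Matrix m m R) :
    (K * D * L * Xᵀ).trace = (K * X * Lᵀ * Dᵀ).trace := by
  rw [← trace_transpose]
  simp only [transpose_mul, transpose_transpose, hK.eq, Matrix.mul_assoc]
  rw [trace_mul_comm K]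
  simp only [Matrix.mul_assoc]

theorem trace_mul_mul_mul_transpose_eq_dotProduct (C : Matrix n n ℝ) (W : Matrix n m ℝ)
    (B : Matrix m m ℝ) : (C * W * B * Wᵀ).trace = star (vec W) ⬝ᵥ (Bᵀ ⊗ₖ C) *ᵥ vec W := by
  rw [kronecker_mulVec_vec, transpose_transpose, star_trivial, vec_dotProduct_vec,
    trace_mul_comm, Matrix.mul_assoc]

theorem trace_mul_mul_mul_transpose_nonneg {C : Matrix n n ℝ} {B : Matrix m m ℝ}
    (hC : C.PosSemidef) (hB : B.PosSemidef) (W : Matrix n m ℝ) : 0 ≤ (C * W * B * Wᵀ).trace := by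
  rw [trace_mul_mul_mul_transpose_eq_dotProduct]
  exact (hB.transpose.kronecker hC).dotProduct_mulVec_nonneg _

theorem trace_mul_mul_mul_transpose_pos {C : Matrix n n ℝ} {B : Matrix m m ℝ} (hC : C.PosDef)
    (hB : B.PosDef) {W : Matrix n m ℝ} (hW : W ≠ 0) : 0 < (C * W * B * Wᵀ).trace := by
  rw [trace_mul_mul_mul_transpose_eq_dotProduct]
  exact (hB.transpose.kronecker hC).dotProduct_mulVec_pos (vec_eq_zero_iff.not.mpr hW)

end Trace

section EntrywiseDeriv

variable {𝕜 l m n : Type*} [NontriviallyNormedField 𝕜] {t : 𝕜}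

-- `Matrix` carries no canonical norm, so matrix-valued curves are differentiated entrywise.
def HasEntrywiseDerivAt (F : 𝕜 → Matrix m n 𝕜) (F' : Matrix m n 𝕜) (t : 𝕜) : Prop :=
  ∀ i j, HasDerivAt (fun s => F s i j) (F' i j) t

theorem hasEntrywiseDerivAt_const (C : Matrix m n 𝕜) (t : 𝕜) :
    HasEntrywiseDerivAt (fun _ => C) 0 t := fun i j => hasDerivAt_const t (C i j)

theorem hasEntrywiseDerivAt_add_smul (X D : Matrix m n 𝕜) (t : 𝕜) :
    HasEntrywiseDerivAt (fun s => X + s • D) D t := fun i j => by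
  simpa using ((hasDerivAt_id t).mul_const (D i j)).const_add (X i j)

namespace HasEntrywiseDerivAt

theorem transpose {F : 𝕜 → Matrix m n 𝕜} {F' : Matrix m n 𝕜} (hF : HasEntrywiseDerivAt F F' t) :
    HasEntrywiseDerivAt (fun s => (F s)ᵀ) F'ᵀ t := fun i j => hF j i

variable [Fintype m]

theorem mul {F : 𝕜 → Matrix l m 𝕜} {G : 𝕜 → Matrix m n 𝕜} {F' G'}
    (hF : HasEntrywiseDerivAt F F' t) (hG : HasEntrywiseDerivAt G G' t) :
    HasEntrywiseDerivAt (fun s => F s * G s) (F' * G t + F t * G') t := fun i j => by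
  simp only [mul_apply, Matrix.add_apply, ← Finset.sum_add_distrib]
  exact HasDerivAt.fun_sum fun k _ => (hF i k).mul (hG k j)

theorem const_mul {G : 𝕜 → Matrix m n 𝕜} {G'} (C : Matrix l m 𝕜)
    (hG : HasEntrywiseDerivAt G G' t) : HasEntrywiseDerivAt (fun s => C * G s) (C * G') t := by
  simpa using (hasEntrywiseDerivAt_const C t).mul hG

theorem mul_const {F : 𝕜 → Matrix l m 𝕜} {F'} (hF : HasEntrywiseDerivAt F F' t)
    (C : Matrix m n 𝕜) : HasEntrywiseDerivAt (fun s => F s * C) (F' * C) t := by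
  simpa using hF.mul (hasEntrywiseDerivAt_const C t)

theorem hasDerivAt_trace {F : 𝕜 → Matrix m m 𝕜} {F'} (hF : HasEntrywiseDerivAt F F' t) :
    HasDerivAt (fun s => (F s).trace) F'.trace t :=
  HasDerivAt.fun_sum fun i _ => hF i i

end HasEntrywiseDerivAt

end EntrywiseDeriv

theorem hasDerivAt_gPot_add_smul {n m : ℕ} {A S : Matrix (Fin n) (Fin n) ℝ}
    {B : Matrix (Fin m) (Fin m) ℝ} (hsyl : Aᵀ * S = S * A) (hSA : (S * A).IsSymm)
    (hB : B.IsSymm) (X : Fin n → Fin m → ℝ) (D : Matrix (Fin n) (Fin m) ℝ) :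
    HasDerivAt (fun t : ℝ => gPot n m A S B (X + t • Matrix.of.symm D))
      (-(S * A * vField n m A S B X * B * Dᵀ).trace) 0 := by
  set M := Matrix.of X
  have hM : HasEntrywiseDerivAt (fun t : ℝ => Matrix.of (X + t • Matrix.of.symm D)) D 0 :=
    hasEntrywiseDerivAt_add_smul M D 0
  have hP := ((hM.const_mul (S * A)).mul_const B).mul hM.transpose
  have hQ := (((hM.const_mul (S * A * A)).mul_const B).mul_const B).mul hM.transpose
  have hg := ((hP.mul hP).hasDerivAt_trace.const_mul (1 / 4)).fun_sub
    (hQ.hasDerivAt_trace.const_mul (1 / 2))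
  simp only [gPot, sq]
  refine hg.congr_deriv ?_
  have hM0 : Matrix.of (X + (0 : ℝ) • Matrix.of.symm D) = M := by simp [M]
  rw [hM0]
  have hSAA : (S * A * A).IsSymm := by
    rw [IsSymm, transpose_mul, hSA.eq, ← Matrix.mul_assoc, hsyl]
  have hV : S * A * vField n m A S B X * B * Dᵀ =
      S * A * A * M * B * B * Dᵀ - S * A * M * B * Mᵀ * (S * A) * M * B * Dᵀ := by
    simp only [vField, Matrix.mul_sub, Matrix.sub_mul, Matrix.mul_assoc]; rfl
  have hquartic : (S * A * M * B * Mᵀ * (S * A * D * B * Mᵀ)).trace =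
      (S * A * M * B * Mᵀ * (S * A * M * B * Dᵀ)).trace :=
    calc _ = (S * A * D * (B * Mᵀ * (S * A) * M * B) * Mᵀ).trace := by
          rw [trace_mul_comm]; simp only [Matrix.mul_assoc]
      _ = (S * A * M * (B * Mᵀ * (S * A) * M * B)ᵀ * Dᵀ).trace :=
          trace_mul_mul_mul_transpose_comm hSA _ _ _
      _ = _ := by
          have hSA' : Aᵀ * Sᵀ = S * A := by rw [← transpose_mul, hSA.eq]
          simp only [transpose_mul, transpose_transpose, hB.eq, hSA', Matrix.mul_assoc]
  have hquadratic : (S * A * A * D * B * B * Mᵀ).trace = (S * A * A * M * B * B * Dᵀ).trace :=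
    calc _ = (S * A * A * D * (B * B) * Mᵀ).trace := by simp only [Matrix.mul_assoc]
      _ = (S * A * A * M * (B * B)ᵀ * Dᵀ).trace :=
          trace_mul_mul_mul_transpose_comm hSAA _ _ _
      _ = _ := by simp only [transpose_mul, hB.eq, Matrix.mul_assoc]
  rw [hV, trace_add, trace_mul_comm (S * A * D * B * Mᵀ + S * A * M * B * Dᵀ)]
  simp only [Matrix.mul_add, trace_add, trace_sub]
  simp only [Matrix.mul_assoc] at hquartic hquadratic ⊢
  linarith

theorem stmt_12_general (n m : ℕ) (A S : Matrix (Fin n) (Fin n) ℝ)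
    (B : Matrix (Fin m) (Fin m) ℝ) (hsyl : Aᵀ * S = S * A)
    (hSA : (S * A).PosDef) (hB : B.PosDef) (X : Fin n → Fin m → ℝ) :
    HasDerivAt (fun t : ℝ => gPot n m A S B (X + t • Matrix.of.symm (vField n m A S B X)))
      (-Matrix.trace (S * A * vField n m A S B X * B * (vField n m A S B X)ᵀ)) 0 ∧
    -Matrix.trace (S * A * vField n m A S B X * B * (vField n m A S B X)ᵀ) ≤ 0 ∧
    (vField n m A S B X ≠ 0 →
      -Matrix.trace (S * A * vField n m A S B X * B * (vField n m A S B X)ᵀ) < 0) := by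
  refine ⟨hasDerivAt_gPot_add_smul hsyl (isHermitian_iff_isSymm.mp hSA.1)
    (isHermitian_iff_isSymm.mp hB.1) X _, ?_, fun hV => ?_⟩
  · exact neg_nonpos.mpr (trace_mul_mul_mul_transpose_nonneg hSA.posSemidef hB.posSemidef _)
  · exact neg_neg_iff_pos.mpr (trace_mul_mul_mul_transpose_pos hSA hB hV)

/-- Along the S-Oja-Brockett vector field the derivative of the potential `g` at `X` in
direction `V(X)` equals `−tr(S A V(X) B V(X)ᵀ) ≤ 0`, with strict inequality whenever
`V(X) ≠ 0`: `g` strictly decreases along nonequilibrium solutions. -/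
theorem stmt_12 (n m : ℕ) (hm : m ≤ n) (A S : Matrix (Fin n) (Fin n) ℝ)
    (B : Matrix (Fin m) (Fin m) ℝ) (hS : S.PosDef) (hsyl : Aᵀ * S = S * A)
    (hSA : (S * A).PosDef) (hB : B.PosDef) (X : Fin n → Fin m → ℝ) :
    HasDerivAt (fun t : ℝ => gPot n m A S B (X + t • Matrix.of.symm (vField n m A S B X)))
      (-Matrix.trace (S * A * vField n m A S B X * B * (vField n m A S B X)ᵀ)) 0 ∧
    -Matrix.trace (S * A * vField n m A S B X * B * (vField n m A S B X)ᵀ) ≤ 0 ∧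
    (vField n m A S B X ≠ 0 →
      -Matrix.trace (S * A * vField n m A S B X * B * (vField n m A S B X)ᵀ) < 0) :=
  stmt_12_general n m A S B hsyl hSA hB X
end

section
/- Let P be a symmetric real n×n matrix, R a symmetric real m×m matrix, Q any real m×n matrix, and δ, ε ∈ ℝ. Define the block matrices 𝒜_δ = [[P + δIₙ, Qᵀ], [−Q, δIₘ + R]] and 𝒮_ε = [[P − εIₙ, Qᵀ], [Q, εIₘ − R]] in ℝ^{(n+m)×(n+m)}. Then the Sylvester equation 𝒜_δᵀ 𝒮_ε = 𝒮_ε 𝒜_δ holds. -/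
open Matrix

/-- For symmetric `P`, `R` and arbitrary `Q`, the perturbed saddle point matrix
`𝒜_δ = [[P + δI, Qᵀ], [−Q, δI + R]]` and the symmetrizer
`𝒮_ε = [[P − εI, Qᵀ], [Q, εI − R]]` satisfy the Sylvester equation `𝒜_δᵀ 𝒮_ε = 𝒮_ε 𝒜_δ`. -/
theorem stmt_13 (n m : ℕ) (P : Matrix (Fin n) (Fin n) ℝ) (R : Matrix (Fin m) (Fin m) ℝ)
    (Q : Matrix (Fin m) (Fin n) ℝ) (hP : Pᵀ = P) (hR : Rᵀ = R) (δ ε : ℝ) :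
    (Matrix.fromBlocks (P + δ • 1) Qᵀ (-Q) (δ • 1 + R))ᵀ
        * Matrix.fromBlocks (P - ε • 1) Qᵀ Q (ε • 1 - R)
      = Matrix.fromBlocks (P - ε • 1) Qᵀ Q (ε • 1 - R)
        * Matrix.fromBlocks (P + δ • 1) Qᵀ (-Q) (δ • 1 + R) := by
  simp only [Matrix.fromBlocks_transpose, Matrix.fromBlocks_multiply, transpose_add,
    transpose_smul, transpose_one, transpose_neg, transpose_transpose, hP, hR]
  rw [Matrix.fromBlocks_inj]
  refine ⟨?_, ?_, ?_, ?_⟩ <;>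
    simp only [mul_add, add_mul, Matrix.mul_add, Matrix.add_mul, Matrix.sub_mul,
        Matrix.mul_sub, smul_mul_assoc, mul_smul_comm, Matrix.smul_mul, Matrix.mul_smul,
        Matrix.neg_mul, Matrix.mul_neg, Matrix.one_mul, Matrix.mul_one, mul_one, one_mul, one_smul, neg_mul, mul_neg,
        smul_neg, neg_smul, smul_smul, smul_add, smul_sub] <;>
    module
end

section
/- Let P be a symmetric real n×n matrix, R a symmetric real m×m matrix, Q a real m×n matrix, and ε, p, r, s ∈ ℝ. Suppose: xᵀPx ≥ p‖x‖² for all x ∈ ℝⁿ, yᵀRy ≤ r‖y‖² for all y ∈ ℝᵐ, ‖Qx‖² ≤ s²‖x‖² for all x ∈ ℝⁿ, and that 0 < p − ε, 0 < ε − r, and s² < (p − ε)(ε − r). Then the block matrix 𝒮_ε = [[P − εIₙ, Qᵀ], [Q, εIₘ − R]] is positive definite. -/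
/-!
Split `z = (x, y)`. The quadratic form of `𝒮_ε` is
`xᵀ(P - ε)x + 2 (Qx)ᵀy + yᵀ(ε - R)y ≥ (p - ε)‖x‖² + (ε - r)‖y‖² - 2 s ‖x‖ ‖y‖`
by Cauchy–Schwarz, and the right-hand side is a binary quadratic form in `(‖x‖, ‖y‖)` with
positive diagonal and discriminant `s² - (p - ε)(ε - r) < 0`, hence positive off the origin.
-/

open Matrix

-- `(aX + dY)² ≥ 4adXY > 4c²` unless `XY = 0`, and then `c = 0`.
lemma add_add_two_mul_pos {a d s X Y c : ℝ} (ha : 0 < a) (hd : 0 < d) (hs : s ^ 2 < a * d)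
    (hX : 0 ≤ X) (hY : 0 ≤ Y) (hXY : 0 < X + Y) (hc : c ^ 2 ≤ s ^ 2 * (X * Y)) :
    0 < a * X + d * Y + 2 * c := by
  by_contra! h
  have hsum : 0 ≤ a * X + d * Y := by positivity
  have hXY0 : X * Y = 0 := by
    nlinarith [sq_nonneg (a * X - d * Y), mul_nonneg hX hY]
  obtain rfl : c = 0 := by
    rw [hXY0, mul_zero] at hc
    exact pow_eq_zero_iff two_ne_zero |>.1 (le_antisymm hc (sq_nonneg c))
  rcases mul_eq_zero.1 hXY0 with rfl | rfl
  · nlinarith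
  · nlinarith

variable {ι κ : Type*} [Fintype ι] [Fintype κ]

lemma sq_dotProduct_le (u v : ι → ℝ) : (u ⬝ᵥ v) ^ 2 ≤ (u ⬝ᵥ u) * (v ⬝ᵥ v) := by
  simpa only [dotProduct, sq] using Finset.sum_mul_sq_le_sq_mul_sq Finset.univ u v

lemma sumElim_dotProduct_fromBlocks_transpose_mulVec (A : Matrix ι ι ℝ) (B : Matrix κ ι ℝ)
    (D : Matrix κ κ ℝ) (x : ι → ℝ) (y : κ → ℝ) :
    Sum.elim x y ⬝ᵥ (fromBlocks A Bᵀ B D *ᵥ Sum.elim x y) =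
      x ⬝ᵥ (A *ᵥ x) + 2 * (B *ᵥ x ⬝ᵥ y) + y ⬝ᵥ (D *ᵥ y) := by
  rw [fromBlocks_mulVec, sumElim_dotProduct_sumElim, Sum.elim_comp_inl, Sum.elim_comp_inr,
    dotProduct_add, dotProduct_add, dotProduct_mulVec x Bᵀ, vecMul_transpose, dotProduct_comm y]
  ring

lemma dotProduct_sub_smul_one_mulVec [DecidableEq ι] (A : Matrix ι ι ℝ) (c : ℝ) (x : ι → ℝ) :
    x ⬝ᵥ ((A - c • 1) *ᵥ x) = x ⬝ᵥ (A *ᵥ x) - c * (x ⬝ᵥ x) := by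
  rw [sub_mulVec, smul_mulVec, one_mulVec, dotProduct_sub, dotProduct_smul, smul_eq_mul]

lemma dotProduct_smul_one_sub_mulVec [DecidableEq ι] (A : Matrix ι ι ℝ) (c : ℝ) (x : ι → ℝ) :
    x ⬝ᵥ ((c • 1 - A) *ᵥ x) = c * (x ⬝ᵥ x) - x ⬝ᵥ (A *ᵥ x) := by
  rw [sub_mulVec, smul_mulVec, one_mulVec, dotProduct_sub, dotProduct_smul, smul_eq_mul]

theorem posDef_fromBlocks_of_quadratic_bounds {A : Matrix ι ι ℝ} {B : Matrix κ ι ℝ}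
    {D : Matrix κ κ ℝ} (hA : A.IsSymm) (hD : D.IsSymm) {a d s : ℝ}
    (hAa : ∀ x, a * (x ⬝ᵥ x) ≤ x ⬝ᵥ (A *ᵥ x)) (hDd : ∀ y, d * (y ⬝ᵥ y) ≤ y ⬝ᵥ (D *ᵥ y))
    (hBs : ∀ x, B *ᵥ x ⬝ᵥ B *ᵥ x ≤ s ^ 2 * (x ⬝ᵥ x)) (ha : 0 < a) (hd : 0 < d)
    (hs : s ^ 2 < a * d) : (fromBlocks A Bᵀ B D).PosDef := by
  refine posDef_iff_dotProduct_mulVec.2 ⟨isHermitian_iff_isSymm.2 (hA.fromBlocks rfl hD), ?_⟩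
  intro z hz
  obtain ⟨x, y, rfl⟩ : ∃ x y, z = Sum.elim x y := ⟨_, _, (Sum.elim_comp_inl_inr z).symm⟩
  have hx : 0 ≤ x ⬝ᵥ x := dotProduct_self_star_nonneg x
  have hy : 0 ≤ y ⬝ᵥ y := dotProduct_self_star_nonneg y
  have hpos : 0 < x ⬝ᵥ x + y ⬝ᵥ y := by
    rw [← sumElim_dotProduct_sumElim]
    exact (dotProduct_self_star_nonneg _).lt_of_ne' (dotProduct_self_eq_zero.not.2 hz)
  have hcross : (B *ᵥ x ⬝ᵥ y) ^ 2 ≤ s ^ 2 * ((x ⬝ᵥ x) * (y ⬝ᵥ y)) :=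
    calc (B *ᵥ x ⬝ᵥ y) ^ 2 ≤ (B *ᵥ x ⬝ᵥ B *ᵥ x) * (y ⬝ᵥ y) := sq_dotProduct_le _ _
      _ ≤ s ^ 2 * (x ⬝ᵥ x) * (y ⬝ᵥ y) := by gcongr; exact hBs x
      _ = s ^ 2 * ((x ⬝ᵥ x) * (y ⬝ᵥ y)) := mul_assoc _ _ _
  rw [star_trivial, sumElim_dotProduct_fromBlocks_transpose_mulVec]
  linarith [hAa x, hDd y, add_add_two_mul_pos ha hd hs hx hy hpos hcross]

/-- Sufficient spectral conditions for positive definiteness of the symmetrizer: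
if `xᵀPx ≥ p‖x‖²`, `yᵀRy ≤ r‖y‖²`, `‖Qx‖² ≤ s²‖x‖²`, and `0 < p − ε`, `0 < ε − r`,
`s² < (p − ε)(ε − r)`, then `𝒮_ε = [[P − εI, Qᵀ], [Q, εI − R]]` is positive definite. -/
theorem stmt_16 (n m : ℕ) (P : Matrix (Fin n) (Fin n) ℝ) (R : Matrix (Fin m) (Fin m) ℝ)
    (Q : Matrix (Fin m) (Fin n) ℝ) (hP : Pᵀ = P) (hR : Rᵀ = R) (ε p r s : ℝ)
    (hp : ∀ x : Fin n → ℝ, p * ∑ i, x i ^ 2 ≤ x ⬝ᵥ (P *ᵥ x))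
    (hr : ∀ y : Fin m → ℝ, y ⬝ᵥ (R *ᵥ y) ≤ r * ∑ i, y i ^ 2)
    (hq : ∀ x : Fin n → ℝ, ∑ i, (Q *ᵥ x) i ^ 2 ≤ s ^ 2 * ∑ i, x i ^ 2)
    (hpe : 0 < p - ε) (her : 0 < ε - r) (hs : s ^ 2 < (p - ε) * (ε - r)) :
    (Matrix.fromBlocks (P - ε • 1) Qᵀ Q (ε • 1 - R)).PosDef := by
  have hsq {k : ℕ} (v : Fin k → ℝ) : ∑ i, v i ^ 2 = v ⬝ᵥ v := by simp only [dotProduct, sq]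
  refine posDef_fromBlocks_of_quadratic_bounds (IsSymm.sub hP (isSymm_one.smul ε))
    ((isSymm_one.smul ε).sub hR) (fun x ↦ ?_) (fun y ↦ ?_) (fun x ↦ ?_) hpe her hs
  · rw [dotProduct_sub_smul_one_mulVec, ← hsq]
    linarith [hp x]
  · rw [dotProduct_smul_one_sub_mulVec, ← hsq]
    linarith [hr y]
  · simpa only [hsq] using hq x
end
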